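/- Let ℓ² = ℓ²(ℕ, ℂ) with standard orthonormal basis (e_n)_{n≥1}, let U ∈ L(ℓ²) be the operator determined by U e_{2n} = e_n and U e_{2n+1} = 0 for all n, and let K ∈ L(ℓ²) be the rank-one operator determined by K e_2 = −e_1 and K e_n = 0 for n ≠ 2. Then U is surjective with infinite-dimensional kernel (so U satisfies Caradus' condition (C)), K is compact, and U + K is not surjective: e_1 does not belong to the range of U + K. Hence the class of operators satisfying condition (C) is not invariant under compact perturbations. -/

import Mathlib

/-!
Every operator on `ℓ²` is determined by its values on the basis `e`. Thus `U` is the adjoint of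
the isometry `e n ↦ e (2n)`, so `(U x) m = x (2m)`, and it is a left inverse of that isometry,
hence surjective; its kernel contains the orthonormal family `e (2n+1)`. The operator `K` is
`x ↦ x 2 • (-e 1)`, of rank one. The first coordinate of `(U + K) x` is therefore
`x 2 - x 2 = 0`, so `e 1` is not attained.
-/

noncomputable section

/-- The standard orthonormal basis vector `e n` of `ℓ²(ℕ, ℂ)`. -/
def e (n : ℕ) : lp (fun _ : ℕ => ℂ) 2 := lp.single 2 n 1

open scoped lp InnerProductSpace

lemma inner_e_left (n : ℕ) (x : ℓ²(ℕ, ℂ)) : ⟪e n, x⟫_ℂ = x n := by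
  simp [e, lp.inner_single_left]

lemma e_apply (n m : ℕ) : e n m = if m = n then 1 else 0 := by
  simp [e, lp.single_apply, Pi.single_apply]

lemma orthonormal_e : Orthonormal ℂ e := by
  rw [orthonormal_iff_ite]
  intro i j
  rw [inner_e_left, e_apply]

lemma ContinuousLinearMap.ext_e {F : Type*} [NormedAddCommGroup F] [NormedSpace ℂ F]
    {T S : ℓ²(ℕ, ℂ) →L[ℂ] F} (h : ∀ n, T (e n) = S (e n)) : T = S := by
  refine lp.ext_continuousLinearMap ENNReal.ofNat_ne_top fun n => ?_
  ext
  simpa [e] using h n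

lemma isCompactOperator_smulRight {𝕜 E F : Type*} [NontriviallyNormedField 𝕜]
    [LocallyCompactSpace 𝕜]
    [NormedAddCommGroup E] [NormedSpace 𝕜 E] [NormedAddCommGroup F] [NormedSpace 𝕜 F]
    (φ : E →L[𝕜] 𝕜) (v : F) : IsCompactOperator (φ.smulRight v) :=
  (isCompactOperator_of_locallyCompactSpace_dom φ).clm_comp
    (ContinuousLinearMap.toSpanSingleton 𝕜 v)

lemma ContinuousLinearMap.eq_smulRight_of_apply_e {F : Type*} [NormedAddCommGroup F]
    [NormedSpace ℂ F] (T : ℓ²(ℕ, ℂ) →L[ℂ] F) {n : ℕ} {v : F} (hn : T (e n) = v)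
    (h : ∀ k, k ≠ n → T (e k) = 0) : T = (innerSL ℂ (e n)).smulRight v := by
  refine ContinuousLinearMap.ext_e fun k => ?_
  rw [smulRight_apply, innerSL_apply_apply, inner_e_left, e_apply]
  by_cases hk : k = n
  · simp [hk, hn]
  · simp [h k hk, Ne.symm hk]

section Reindexing

variable {f : ℕ → ℕ} (hf : Function.Injective f) {T : ℓ²(ℕ, ℂ) →L[ℂ] ℓ²(ℕ, ℂ)}
  (hT : ∀ n, T (e (f n)) = e n)
include hf hT

lemma ContinuousLinearMap.apply_apply_of_apply_e_comp (hT0 : ∀ k, k ∉ Set.range f → T (e k) = 0)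
    (x : ℓ²(ℕ, ℂ)) (m : ℕ) : T x m = x (f m) := by
  have hcoord : (innerSL ℂ (e m)).comp T = innerSL ℂ (e (f m)) := by
    refine ContinuousLinearMap.ext_e fun k => ?_
    by_cases hk : k ∈ Set.range f
    · obtain ⟨n, rfl⟩ := hk
      simp [hT, inner_e_left, e_apply, hf.eq_iff]
    · have hmk : f m ≠ k := fun h => hk ⟨m, h⟩
      simp [hT0 k hk, inner_e_left, e_apply, hmk]
  simpa [inner_e_left] using congr($hcoord x)

lemma ContinuousLinearMap.surjective_of_apply_e_comp : Function.Surjective T := by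
  let V := (orthonormal_e.comp f hf).orthogonalFamily.linearIsometry
  have hTV : T.comp V.toContinuousLinearMap = ContinuousLinearMap.id ℂ _ := by
    refine ContinuousLinearMap.ext_e fun n => ?_
    simpa [V, e, OrthogonalFamily.linearIsometry_apply_single] using hT n
  exact fun y => ⟨V y, congr($hTV y)⟩

end Reindexing

lemma ContinuousLinearMap.not_finiteDimensional_ker_of_apply_e_comp {F : Type*}
    [NormedAddCommGroup F] [NormedSpace ℂ F] {T : ℓ²(ℕ, ℂ) →L[ℂ] F} {g : ℕ → ℕ}
    (hg : Function.Injective g) (hT : ∀ n, T (e (g n)) = 0) :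
    ¬ FiniteDimensional ℂ (LinearMap.ker T.toLinearMap) := by
  intro _
  let v : ℕ → LinearMap.ker T.toLinearMap := fun n => ⟨e (g n), hT n⟩
  have : LinearIndependent ℂ v :=
    .of_comp (LinearMap.ker T.toLinearMap).subtype ((orthonormal_e.comp g hg).linearIndependent)
  exact Module.Finite.not_linearIndependent_of_infinite v this

theorem caradus_not_invariant_under_compact_perturbation
    (U K : lp (fun _ : ℕ => ℂ) 2 →L[ℂ] lp (fun _ : ℕ => ℂ) 2)
    (hU1 : ∀ n : ℕ, U (e (2 * n)) = e n)
    (hU2 : ∀ n : ℕ, U (e (2 * n + 1)) = 0)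
    (hK1 : K (e 2) = -(e 1))
    (hK2 : ∀ n : ℕ, n ≠ 2 → K (e n) = 0) :
    Function.Surjective U ∧
    ¬ FiniteDimensional ℂ (LinearMap.ker U.toLinearMap) ∧
    IsCompactOperator K ∧
    e 1 ∉ LinearMap.range (U + K).toLinearMap ∧
    ¬ Function.Surjective (U + K) := by
  have hdouble : Function.Injective (2 * · : ℕ → ℕ) := mul_right_injective₀ two_ne_zero
  have hU0 : ∀ k, k ∉ Set.range (2 * ·) → U (e k) = 0 := by
    intro k hk
    obtain ⟨n, rfl | rfl⟩ := Nat.even_or_odd' k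
    · exact absurd ⟨n, rfl⟩ hk
    · exact hU2 n
  have hK : K = (innerSL ℂ (e 2)).smulRight (-e 1) := K.eq_smulRight_of_apply_e hK1 hK2
  have hrange : e 1 ∉ LinearMap.range (U + K).toLinearMap := by
    rintro ⟨x, hx⟩
    have h : (U x + K x) 1 = e 1 1 := congr($hx 1)
    rw [lp.coeFn_add, Pi.add_apply, U.apply_apply_of_apply_e_comp hdouble hU1 hU0, hK,
      ContinuousLinearMap.smulRight_apply, lp.coeFn_smul, Pi.smul_apply, lp.coeFn_neg,
      Pi.neg_apply, innerSL_apply_apply, inner_e_left, e_apply] at h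
    simp at h
  exact ⟨U.surjective_of_apply_e_comp hdouble hU1,
    U.not_finiteDimensional_ker_of_apply_e_comp (g := (2 * · + 1))
      (fun a b h => by simpa using h) hU2,
    hK ▸ isCompactOperator_smulRight _ _, hrange, fun h => hrange (h (e 1))⟩

end
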